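/- arXiv:math/0104283 — 2 statements merged into one kernel-verified Lean document; each statement's English description precedes it below -/
import Mathlib

section
/- Let R be a K-algebra with an (ℕ^n, ⪯)-filtration F such that F_0(R) = Λ, and let x_1, …, x_s ∈ R be elements whose principal symbols y_i = x_i + F_{≺α_i}(R) (where α_i = mdeg(x_i)) are such that the standard monomials { y^γ = y_1^{γ_1}⋯y_s^{γ_s} : γ ∈ ℕ^s } are left Λ-linearly independent in G^F(R). Then the standard monomials { x^γ = x_1^{γ_1}⋯x_s^{γ_s} : γ ∈ ℕ^s } are left Λ-linearly independent in R. -/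
/-! Suppose `∑ a_γ x^γ = 0` with some `a_γ ≠ 0`, and let `δ` be the largest degree `∑ γ_i α_i`
among the `γ` with `a_γ ≠ 0`. Every term of another degree lies in `F_{≺δ}`, hence so does the
homogeneous part of degree `δ`; independence of the symbols then forces all of its coefficients,
among them a nonzero one, to vanish. -/

/-- An admissible order on ℕ^n. -/
def IsAdmissibleOrder {n : ℕ} (r : (Fin n → ℕ) → (Fin n → ℕ) → Prop) : Prop :=
  IsLinearOrder (Fin n → ℕ) r ∧
    (∀ α β γ : Fin n → ℕ, r α β → r (α + γ) (β + γ)) ∧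
    (∀ α : Fin n → ℕ, r 0 α)

section
variable {K : Type*} [CommRing K] {R : Type*} [Ring R] [Algebra K R] {n s : ℕ}

/-- `F` is an (ℕ^n, r)-filtration of the K-algebra R. -/
def IsMultiFiltration (r : (Fin n → ℕ) → (Fin n → ℕ) → Prop)
    (F : (Fin n → ℕ) → Submodule K R) : Prop :=
  (∀ α β, r α β → F α ≤ F β) ∧
    (∀ α β, ∀ x ∈ F α, ∀ y ∈ F β, x * y ∈ F (α + β)) ∧
    (∀ x : R, ∃ α, x ∈ F α) ∧ (1 : R) ∈ F 0

/-- F_{≺α}(R) = ⋃_{β ≺ α} F_β(R) (as a submodule of R it also contains 0). -/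
def Fprec (r : (Fin n → ℕ) → (Fin n → ℕ) → Prop)
    (F : (Fin n → ℕ) → Submodule K R) (α : Fin n → ℕ) : Set R :=
  {x | x = 0 ∨ ∃ β, r β α ∧ β ≠ α ∧ x ∈ F β}

/-- `d` is the multi-degree of `x`. -/
def IsMdeg (r : (Fin n → ℕ) → (Fin n → ℕ) → Prop)
    (F : (Fin n → ℕ) → Submodule K R) (d : Fin n → ℕ) (x : R) : Prop :=
  x ∈ F d ∧ ∀ β, x ∈ F β → r d β

/-- The standard (ordered) monomial x^γ = x_1^{γ_1} ⋯ x_s^{γ_s}. -/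
def stdMono (x : Fin s → R) (γ : Fin s → ℕ) : R :=
  (List.ofFn fun i => x i ^ γ i).prod

theorem Finset.exists_rel_max {ι β : Type*} {r : β → β → Prop} [IsTrans β r] [Std.Total r]
    (f : ι → β) {S : Finset ι} (hS : S.Nonempty) : ∃ m ∈ S, ∀ b ∈ S, r (f b) (f m) := by
  induction hS using Finset.Nonempty.cons_induction with
  | singleton c => exact ⟨c, by simp, by simpa using refl_of r (f c)⟩
  | cons c S hc hS ih =>
    obtain ⟨m, hm, hmax⟩ := ih
    rcases Std.Total.total (r := r) (f c) (f m) with hcm | hmc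
    · exact ⟨m, by simp [hm], by simpa [hcm] using hmax⟩
    · refine ⟨c, by simp, ?_⟩
      simpa [refl_of r (f c)] using fun b hb => _root_.trans (hmax b hb) hmc

namespace IsMultiFiltration

variable {r : (Fin n → ℕ) → (Fin n → ℕ) → Prop} {F : (Fin n → ℕ) → Submodule K R}

theorem pow_mem (hF : IsMultiFiltration r F) {d : Fin n → ℕ} {y : R} (hy : y ∈ F d) (k : ℕ) :
    y ^ k ∈ F (k • d) := by
  induction k with
  | zero => simpa using hF.2.2.2
  | succ k ih => rw [pow_succ, succ_nsmul]; exact hF.2.1 _ _ _ ih _ hy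

theorem stdMono_mem (hF : IsMultiFiltration r F) {s : ℕ} {x : Fin s → R}
    {α : Fin s → Fin n → ℕ} (hx : ∀ i, x i ∈ F (α i)) (γ : Fin s → ℕ) :
    stdMono x γ ∈ F (∑ i, γ i • α i) := by
  induction s with
  | zero => simpa [stdMono] using hF.2.2.2
  | succ s ih =>
    have hcons : stdMono x γ = x 0 ^ γ 0 * stdMono (fun i => x i.succ) (fun i => γ i.succ) := by
      simp [stdMono, List.ofFn_succ]
    rw [hcons, Fin.sum_univ_succ]
    exact hF.2.1 _ _ _ (hF.pow_mem (hx 0) (γ 0)) _ (ih (fun i => hx i.succ) _)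

theorem add_mem_Fprec [Std.Total r] (hF : IsMultiFiltration r F) {δ : Fin n → ℕ} {u v : R}
    (hu : u ∈ Fprec r F δ) (hv : v ∈ Fprec r F δ) : u + v ∈ Fprec r F δ := by
  rcases hu with rfl | ⟨β₁, hβ₁, hne₁, hu⟩
  · simpa using hv
  rcases hv with rfl | ⟨β₂, hβ₂, hne₂, hv⟩
  · exact Or.inr ⟨β₁, hβ₁, hne₁, by simpa using hu⟩
  rcases Std.Total.total (r := r) β₁ β₂ with h | h
  · exact Or.inr ⟨β₂, hβ₂, hne₂, add_mem (hF.1 _ _ h hu) hv⟩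
  · exact Or.inr ⟨β₁, hβ₁, hne₁, add_mem hu (hF.1 _ _ h hv)⟩

theorem sum_filter_ne_mem_Fprec [Std.Total r] (hF : IsMultiFiltration r F) {ι : Type*}
    (Γ : Finset ι) (f : ι → R) (d : ι → Fin n → ℕ) (δ : Fin n → ℕ)
    (hf : ∀ γ ∈ Γ, f γ ∈ F (d γ)) (hmax : ∀ γ ∈ Γ, f γ ≠ 0 → r (d γ) δ) :
    ∑ γ ∈ Γ with d γ ≠ δ, f γ ∈ Fprec r F δ := by
  refine Finset.sum_induction _ (· ∈ Fprec r F δ) (fun _ _ => hF.add_mem_Fprec) (Or.inl rfl) ?_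
  intro γ hγ
  rw [Finset.mem_filter] at hγ
  by_cases hfγ : f γ = 0
  · exact Or.inl hfγ
  · exact Or.inr ⟨d γ, hmax γ hγ.1 hfγ, hγ.2, hf γ hγ.1⟩

theorem sum_filter_eq_mem_Fprec [Std.Total r] (hF : IsMultiFiltration r F) {ι : Type*}
    (Γ : Finset ι) (f : ι → R) (d : ι → Fin n → ℕ) (δ : Fin n → ℕ)
    (hf : ∀ γ ∈ Γ, f γ ∈ F (d γ)) (hmax : ∀ γ ∈ Γ, f γ ≠ 0 → r (d γ) δ)
    (hsum : ∑ γ ∈ Γ, f γ = 0) :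
    ∑ γ ∈ Γ with d γ = δ, f γ ∈ Fprec r F δ := by
  have hsplit := Finset.sum_filter_add_sum_filter_not Γ (fun γ => d γ = δ) f
  rw [hsum, ← eq_neg_iff_add_eq_zero] at hsplit
  rw [hsplit]
  rcases hF.sum_filter_ne_mem_Fprec Γ f d δ hf hmax with h | ⟨β, hβ, hne, hmem⟩
  · exact Or.inl (by simp [h])
  · exact Or.inr ⟨β, hβ, hne, neg_mem hmem⟩

end IsMultiFiltration

/-- If the principal symbols y_i = x_i + F_{≺α_i} of x_1, …, x_s have left
Λ-linearly independent standard monomials in G^F(R) (Λ = F_0), then the standard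
monomials in the x_i are left Λ-linearly independent in R.
The independence of the monomials y^γ in the graded algebra is expressed in each
degree δ: a homogeneous combination Σ_{γ·M = δ} a_γ x^γ lying in F_{≺δ} has all
coefficients zero. -/
theorem stmt9 (r : (Fin n → ℕ) → (Fin n → ℕ) → Prop) (hr : IsAdmissibleOrder r)
    (F : (Fin n → ℕ) → Submodule K R) (hF : IsMultiFiltration r F)
    (x : Fin s → R) (α : Fin s → Fin n → ℕ)
    (hx : ∀ i, IsMdeg r F (α i) (x i))
    (hyindep : ∀ δ : Fin n → ℕ, ∀ Γ : Finset (Fin s → ℕ),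
      (∀ γ ∈ Γ, ∑ i, γ i • α i = δ) →
      ∀ a : (Fin s → ℕ) → R, (∀ γ ∈ Γ, a γ ∈ F 0) →
      (∑ γ ∈ Γ, a γ * stdMono x γ) ∈ Fprec r F δ → ∀ γ ∈ Γ, a γ = 0) :
    ∀ Γ : Finset (Fin s → ℕ), ∀ a : (Fin s → ℕ) → R,
      (∀ γ ∈ Γ, a γ ∈ F 0) → (∑ γ ∈ Γ, a γ * stdMono x γ) = 0 →
      ∀ γ ∈ Γ, a γ = 0 := by
  classical
  have := hr.1
  intro Γ a ha hsum
  by_contra! hne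
  obtain ⟨γ₀, hγ₀, ha₀⟩ := hne
  set d : (Fin s → ℕ) → Fin n → ℕ := fun γ => ∑ i, γ i • α i
  obtain ⟨m, hm, hmax⟩ := Finset.exists_rel_max (r := r) d
    (S := Γ.filter (a · ≠ 0)) ⟨γ₀, Finset.mem_filter.2 ⟨hγ₀, ha₀⟩⟩
  rw [Finset.mem_filter] at hm
  have hterm : ∀ γ ∈ Γ, a γ * stdMono x γ ∈ F (d γ) := fun γ hγ => by
    simpa only [zero_add] using hF.2.1 _ _ _ (ha γ hγ) _ (hF.stdMono_mem (fun i => (hx i).1) γ)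
  have hlead := hF.sum_filter_eq_mem_Fprec Γ _ d (d m) hterm
    (fun γ hγ hγ0 => hmax γ (Finset.mem_filter.2 ⟨hγ, left_ne_zero_of_mul hγ0⟩)) hsum
  exact hm.2 <| hyindep (d m) _ (fun γ hγ => (Finset.mem_filter.1 hγ).2) a
    (fun γ hγ => ha γ (Finset.mem_filter.1 hγ).1) hlead m (Finset.mem_filter.2 ⟨hm.1, rfl⟩)

end
end

section
/- Let R be a K-algebra with an (ℕ^n, ⪯)-filtration F such that F_0(R) = Λ and such that G^F(R) is a free left Λ-module with basis the standard monomials { y^γ : γ ∈ ℕ^s } in homogeneous elements y_1, …, y_s of degrees α_1, …, α_s. Choose x_i ∈ F_{α_i}(R) lifting y_i. Then every r ∈ R with mdeg(r) = δ can be written r = Σ_{γ·M ⪯ δ} a_γ x^γ with a_γ ∈ Λ, where M is the matrix with rows α_1, …, α_s and γ·M = γ_1 α_1 + ⋯ + γ_s α_s. Consequently { x^γ : γ ∈ ℕ^s } generates R as a left Λ-module. -/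
section
variable {K : Type*} [CommRing K] {R : Type*} [Ring R] [Algebra K R] {n s : ℕ}

theorem IsAdmissibleOrder.of_le {r : (Fin n → ℕ) → (Fin n → ℕ) → Prop} (hr : IsAdmissibleOrder r)
    {β δ : Fin n → ℕ} (h : β ≤ δ) : r β δ := by
  have := hr.2.1 0 (δ - β) β (hr.2.2 _)
  rwa [zero_add, tsub_add_cancel_of_le h] at this

theorem IsAdmissibleOrder.wellFounded {r : (Fin n → ℕ) → (Fin n → ℕ) → Prop}
    (hr : IsAdmissibleOrder r) : WellFounded fun β δ => r β δ ∧ β ≠ δ := by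
  have := hr.1
  have hwqo : WellQuasiOrdered r := fun f => by
    obtain ⟨i, j, hij, hle⟩ := wellQuasiOrdered_le f
    exact ⟨i, j, hij, hr.of_le hle⟩
  exact Subrelation.wf (fun h => ⟨h.1, fun h' => h.2 (antisymm h.1 h')⟩) hwqo.wellFounded

variable {ι S : Type*} [SetLike S R]

def IsLeftCombination (A : S) (P : ι → Prop) (m : ι → R) (z : R) : Prop :=
  ∃ Γ : Finset ι, (∀ γ ∈ Γ, P γ) ∧ ∃ a : ι → R, (∀ γ ∈ Γ, a γ ∈ A) ∧ z = ∑ γ ∈ Γ, a γ * m γ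

namespace IsLeftCombination

variable {A : S} {P Q : ι → Prop} {m : ι → R} {z w : R}

theorem mono (h : IsLeftCombination A P m z) (hPQ : ∀ γ, P γ → Q γ) :
    IsLeftCombination A Q m z := by
  obtain ⟨Γ, hΓ, a, ha, rfl⟩ := h
  exact ⟨Γ, fun γ hγ => hPQ γ (hΓ γ hγ), a, ha, rfl⟩

theorem add [AddSubmonoidClass S R] (hz : IsLeftCombination A P m z)
    (hw : IsLeftCombination A P m w) :
    IsLeftCombination A P m (z + w) := by
  classical
  obtain ⟨Γ, hΓ, a, ha, rfl⟩ := hz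
  obtain ⟨Δ, hΔ, b, hb, rfl⟩ := hw
  refine ⟨Γ ∪ Δ, fun γ hγ => (Finset.mem_union.1 hγ).elim (hΓ γ) (hΔ γ),
    fun γ => (if γ ∈ Γ then a γ else 0) + (if γ ∈ Δ then b γ else 0), fun γ _ => ?_, ?_⟩
  · apply add_mem <;> split_ifs <;> first | exact ha γ ‹_› | exact hb γ ‹_› | exact zero_mem A
  · simp only [add_mul, ite_mul, zero_mul]
    rw [Finset.sum_add_distrib, Finset.sum_ite_mem, Finset.sum_ite_mem,
      Finset.union_inter_cancel_left, Finset.union_inter_cancel_right]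

end IsLeftCombination

theorem isLeftCombination_of_mem_filtration {r : (Fin n → ℕ) → (Fin n → ℕ) → Prop}
    [IsPreorder (Fin n → ℕ) r] [AddSubmonoidClass S R]
    (hwf : WellFounded fun β δ => r β δ ∧ β ≠ δ)
    (F : (Fin n → ℕ) → Submodule K R) (A : S) (m : ι → R) (deg : ι → Fin n → ℕ)
    (hlead : ∀ δ, ∀ z ∈ F δ, ∃ w, IsLeftCombination A (deg · = δ) m w ∧ z - w ∈ Fprec r F δ)
    (δ : Fin n → ℕ) : ∀ z ∈ F δ, IsLeftCombination A (fun γ => r (deg γ) δ) m z := by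
  induction δ using hwf.induction with
  | _ δ ih =>
    intro z hz
    obtain ⟨w, hw, hzw⟩ := hlead δ z hz
    have hw' : IsLeftCombination A (fun γ => r (deg γ) δ) m w :=
      hw.mono fun γ h => h ▸ refl_of r _
    rcases hzw with hzw | ⟨β, hβδ, hβne, hβ⟩
    · rwa [sub_eq_zero.1 hzw]
    · have hrest := (ih β ⟨hβδ, hβne⟩ _ hβ).mono fun γ h => trans_of r h hβδ
      simpa using hrest.add hw'

theorem stmt10_general (r : (Fin n → ℕ) → (Fin n → ℕ) → Prop) (hr : IsAdmissibleOrder r)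
    (F : (Fin n → ℕ) → Submodule K R) (hF : IsMultiFiltration r F)
    (x : Fin s → R) (α : Fin s → Fin n → ℕ)
    (hspan : ∀ δ : Fin n → ℕ, ∀ z ∈ F δ, ∃ Γ : Finset (Fin s → ℕ),
      (∀ γ ∈ Γ, ∑ i, γ i • α i = δ) ∧ ∃ a : (Fin s → ℕ) → R,
      (∀ γ ∈ Γ, a γ ∈ F 0) ∧ z - ∑ γ ∈ Γ, a γ * stdMono x γ ∈ Fprec r F δ) :
    (∀ δ : Fin n → ℕ, ∀ z ∈ F δ, ∃ Γ : Finset (Fin s → ℕ),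
      (∀ γ ∈ Γ, r (∑ i, γ i • α i) δ) ∧ ∃ a : (Fin s → ℕ) → R,
      (∀ γ ∈ Γ, a γ ∈ F 0) ∧ z = ∑ γ ∈ Γ, a γ * stdMono x γ) ∧
    (∀ z : R, ∃ Γ : Finset (Fin s → ℕ), ∃ a : (Fin s → ℕ) → R,
      (∀ γ ∈ Γ, a γ ∈ F 0) ∧ z = ∑ γ ∈ Γ, a γ * stdMono x γ) := by
  have := hr.1
  have hlead : ∀ δ, ∀ z ∈ F δ, ∃ w, IsLeftCombination (F 0) (∑ i, · i • α i = δ)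
      (stdMono x) w ∧ z - w ∈ Fprec r F δ := fun δ z hz => by
    obtain ⟨Γ, hΓ, a, ha, hz⟩ := hspan δ z hz
    exact ⟨_, ⟨Γ, hΓ, a, ha, rfl⟩, hz⟩
  have bounded := isLeftCombination_of_mem_filtration hr.wellFounded F (F 0) (stdMono x)
    (fun γ => ∑ i, γ i • α i) hlead
  refine ⟨bounded, fun z => ?_⟩
  obtain ⟨δ, hδ⟩ := hF.2.2.1 z
  obtain ⟨Γ, -, a, ha, hz⟩ := bounded δ z hδ
  exact ⟨Γ, a, ha, hz⟩

/-- If G^F(R) is a free left Λ-module (Λ = F_0) on the standard monomials in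
homogeneous elements y_i of degrees α_i lifted by x_i ∈ F_{α_i}(R) — i.e. every
element of F_δ is congruent modulo F_{≺δ} to a homogeneous combination
Σ_{γ·M = δ} a_γ x^γ — then every r ∈ F_δ can be written as Σ_{γ·M ⪯ δ} a_γ x^γ
with a_γ ∈ Λ; consequently the x^γ generate R as a left Λ-module. -/
theorem stmt10 (r : (Fin n → ℕ) → (Fin n → ℕ) → Prop) (hr : IsAdmissibleOrder r)
    (F : (Fin n → ℕ) → Submodule K R) (hF : IsMultiFiltration r F)
    (x : Fin s → R) (α : Fin s → Fin n → ℕ) (hx : ∀ i, x i ∈ F (α i))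
    (hspan : ∀ δ : Fin n → ℕ, ∀ z ∈ F δ, ∃ Γ : Finset (Fin s → ℕ),
      (∀ γ ∈ Γ, ∑ i, γ i • α i = δ) ∧ ∃ a : (Fin s → ℕ) → R,
      (∀ γ ∈ Γ, a γ ∈ F 0) ∧ z - ∑ γ ∈ Γ, a γ * stdMono x γ ∈ Fprec r F δ) :
    (∀ δ : Fin n → ℕ, ∀ z ∈ F δ, ∃ Γ : Finset (Fin s → ℕ),
      (∀ γ ∈ Γ, r (∑ i, γ i • α i) δ) ∧ ∃ a : (Fin s → ℕ) → R,
      (∀ γ ∈ Γ, a γ ∈ F 0) ∧ z = ∑ γ ∈ Γ, a γ * stdMono x γ) ∧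
    (∀ z : R, ∃ Γ : Finset (Fin s → ℕ), ∃ a : (Fin s → ℕ) → R,
      (∀ γ ∈ Γ, a γ ∈ F 0) ∧ z = ∑ γ ∈ Γ, a γ * stdMono x γ) :=
  stmt10_general r hr F hF x α hspan

end
end
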